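/- arXiv:1510.06094 — 4 statements merged into one kernel-verified Lean document; each statement's English description precedes it below -/
import Mathlib

section
/- Let k = 2K+1 ≥ 5 be an odd integer. Suppose that the parity theorem for double zeta values of weight k holds in the form: for every r with 1 ≤ r ≤ K-1 there exists a rational number q_r such that ζ(2r, k-2r) = ∑_{s=1}^{K-1} [C(2K-2s, 2r-1) + C(2K-2s, 2K-2r)] · ζ(2s)·ζ(k-2s) + q_r · ζ(k). Then for every s with 1 ≤ s ≤ K-1 there exists a rational number q such that ζ(2s)·ζ(k-2s) = ∑_{r=1}^{K-1} d_{r,s} · ζ(2r, k-2r) + q · ζ(k), where d_{r,s} = (2/(2s-1)) · ∑_{n=0}^{k-2s} C(2r-1, k-2s-n) · C(n+2s-2, n) · B_n. -/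
/-- The Riemann zeta value `ζ(c) = ∑_{n ≥ 1} 1/n^c` (as a sum of real numbers). -/
noncomputable def riemannZetaValue (c : ℕ) : ℝ :=
  ∑' n : ℕ, 1 / ((n : ℝ) + 1) ^ c

/-- The double zeta value `ζ(a,b) = ∑_{0 < m < n} 1/(m^a · n^b)`
(as an iterated sum of real numbers). -/
noncomputable def doubleZetaValue (a b : ℕ) : ℝ :=
  ∑' n : ℕ, (∑ m ∈ Finset.Ico 1 n, 1 / (m : ℝ) ^ a) / (n : ℝ) ^ b

/-!
The hypothesis says that the vector of double zeta values `ζ(2r, k-2r)` is `cᵀ` applied to the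
vector of products `ζ(2t) ζ(k-2t)`, modulo `ℚ ζ(k)`, where
`c t r = C(2K-2t, 2r-1) + C(2K-2t, 2K-2r)`. So it suffices that `d_{·,s}` is the `s`-th row of a
left inverse of `cᵀ`, a purely combinatorial identity.

Put `N = k - 2s`, `b = 2s - 2` and `G(L) = ∑ₙ C(L, N-n) C(n+b, n) Bₙ`, so that
`d_{r,s} = 2/(2s-1) · G(2r-1)`. `G(L)` is the coefficient of `xᴺ` in `A(x) (1+x)ᴸ` with
`A(x) = ∑ₙ C(n+b, n) Bₙ xⁿ`. Pascal's rule and `Bₙ = (-1)ⁿ B'ₙ` give the reflection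
`G(L) = -G(N+b-L)` (`N` is odd), which turns `∑_r d_{r,s} c t r` into the alternating sum
`∑ⱼ (-1)ʲ C(2K-2t, j) G(j)`, the coefficient of `xᴺ` in `A(x) (-x)^(2K-2t)`. This is zero for
`t < s` and a multiple of `B_{2t-2s+1}` for `t ≥ s`, so it vanishes unless `t = s`.
-/

open Finset PowerSeries

theorem PowerSeries.coeff_one_add_X_pow {R : Type*} [CommSemiring R] (L j : ℕ) :
    coeff j ((1 + X : R⟦X⟧) ^ L) = L.choose j := by
  rw [show (1 + X : R⟦X⟧) ^ L = ((1 + Polynomial.X) ^ L : Polynomial R) by simp,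
    Polynomial.coeff_coe, Polynomial.coeff_one_add_X_pow]

theorem sum_range_succ_choose_mul_bernoulli (M : ℕ) :
    ∑ k ∈ range (M + 1), (M.choose k : ℚ) * bernoulli k = bernoulli' M := by
  rw [sum_range_succ, sum_bernoulli, Nat.choose_self, Nat.cast_one, one_mul]
  rcases eq_or_ne M 1 with rfl | hM
  · norm_num
  · rw [if_neg hM, zero_add, bernoulli_eq_bernoulli'_of_ne_one hM]

theorem Nat.add_choose_sub_mul_add_choose (b M n : ℕ) (hn : n ≤ M) :
    (M + b).choose (M - n) * (n + b).choose n = (M + b).choose M * M.choose n := by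
  rw [Nat.choose_symm_of_eq_add (show M + b = (M - n) + (n + b) by omega), Nat.choose_symm_add,
    Nat.choose_symm_add (a := M), Nat.choose_mul (by omega : b ≤ n + b)]
  simp

section AlternatingSums

variable {R : Type*} [CommRing R]

theorem sum_range_two_mul_add_one_neg_one_pow_mul (f : ℕ → R) (n : ℕ) :
    ∑ j ∈ range (2 * n + 1), (-1) ^ j * f j =
      f 0 - ∑ r ∈ Icc 1 n, (f (2 * r - 1) - f (2 * r)) := by
  induction n with
  | zero => simp
  | succ n ih =>
    rw [show 2 * (n + 1) + 1 = 2 * n + 1 + 1 + 1 by ring, sum_range_succ, sum_range_succ, ih,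
      sum_Icc_succ_top (by omega), show 2 * (n + 1) - 1 = 2 * n + 1 by omega,
      show 2 * (n + 1) = 2 * n + 1 + 1 by ring]
    have h : (-1 : R) ^ (2 * n) = 1 := by simp [pow_mul]
    simp only [pow_succ, h]
    ring

theorem sum_Icc_sub_reflect_eq_neg_sum_range_neg_one_pow_mul (f : ℕ → R) {K : ℕ} (hK : 1 ≤ K)
    (h0 : f 0 = 0) (hlast : f (2 * K - 1) = 0) :
    ∑ r ∈ Icc 1 (K - 1), (f (2 * r - 1) - f (2 * K - 2 * r)) =
      -∑ j ∈ range (2 * K), (-1) ^ j * f j := by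
  obtain ⟨n, rfl⟩ : ∃ n, K = n + 1 := ⟨K - 1, by omega⟩
  have reflect : ∑ r ∈ Icc 1 n, f (2 * (n + 1) - 2 * r) = ∑ r ∈ Icc 1 n, f (2 * r) := by
    have := sum_Ico_reflect (fun j => f (2 * j)) 1 (m := n + 1) (n := n + 1) (by omega)
    simp only [Nat.mul_sub] at this
    rwa [show n + 1 + 1 - (n + 1) = 1 by omega, Nat.add_sub_cancel,
      Ico_add_one_right_eq_Icc] at this
  rw [show 2 * (n + 1) - 1 = 2 * n + 1 by omega] at hlast
  rw [Nat.add_sub_cancel, sum_sub_distrib, reflect, ← sum_sub_distrib,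
    show 2 * (n + 1) = 2 * n + 1 + 1 by ring, sum_range_succ,
    sum_range_two_mul_add_one_neg_one_pow_mul, hlast, h0]
  ring

end AlternatingSums

def bernoulliChooseSum (b M L : ℕ) : ℚ :=
  ∑ n ∈ range (M + 1), (L.choose (M - n) : ℚ) * ((n + b).choose n : ℚ) * bernoulli n

def shiftedBernoulliSeries (b : ℕ) : ℚ⟦X⟧ :=
  PowerSeries.mk fun n => ((n + b).choose n : ℚ) * bernoulli n

theorem bernoulliChooseSum_eq_coeff (b M L : ℕ) :
    bernoulliChooseSum b M L = coeff M (shiftedBernoulliSeries b * (1 + X) ^ L) := by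
  rw [coeff_mul, Nat.sum_antidiagonal_eq_sum_range_succ (fun i j => coeff i _ * coeff j _)]
  simp only [shiftedBernoulliSeries, coeff_mk, coeff_one_add_X_pow]
  exact sum_congr rfl fun n _ => by ring

theorem bernoulliChooseSum_succ_succ (b M L : ℕ) :
    bernoulliChooseSum b (M + 1) (L + 1) =
      bernoulliChooseSum b (M + 1) L + bernoulliChooseSum b M L := by
  simp only [bernoulliChooseSum_eq_coeff, pow_succ, mul_add, mul_one, ← mul_assoc, map_add,
    coeff_succ_mul_X]

theorem bernoulliChooseSum_zero_left (b L : ℕ) : bernoulliChooseSum b 0 L = 1 := by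
  simp [bernoulliChooseSum]

theorem bernoulliChooseSum_zero_right (b M : ℕ) :
    bernoulliChooseSum b M 0 = ((M + b).choose M : ℚ) * bernoulli M := by
  simp [bernoulliChooseSum_eq_coeff, shiftedBernoulliSeries]

theorem bernoulliChooseSum_add_self (b M : ℕ) :
    bernoulliChooseSum b M (M + b) = ((M + b).choose M : ℚ) * bernoulli' M := by
  have h : ∀ n ∈ range (M + 1),
      ((M + b).choose (M - n) : ℚ) * ((n + b).choose n : ℚ) * bernoulli n
        = ((M + b).choose M : ℚ) * ((M.choose n : ℚ) * bernoulli n) := fun n hn => by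
    rw [← Nat.cast_mul,
      Nat.add_choose_sub_mul_add_choose b M n (by simpa [Nat.lt_succ_iff] using hn)]
    push_cast
    ring
  rw [bernoulliChooseSum, sum_congr rfl h, ← mul_sum, sum_range_succ_choose_mul_bernoulli]

theorem bernoulliChooseSum_reflect (b M L : ℕ) (hL : L ≤ M + b) :
    bernoulliChooseSum b M L = (-1) ^ M * bernoulliChooseSum b M (M + b - L) := by
  induction M generalizing L with
  | zero => simp [bernoulliChooseSum_zero_left]
  | succ M ihM =>
    induction L with
    | zero =>
      rw [bernoulliChooseSum_zero_right, Nat.sub_zero, bernoulliChooseSum_add_self, bernoulli]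
      ring
    | succ L ihL =>
      rw [bernoulliChooseSum_succ_succ, ihL (by omega), ihM L (by omega),
        show M + 1 + b - L = M + b - L + 1 by omega,
        show M + 1 + b - (L + 1) = M + b - L by omega, bernoulliChooseSum_succ_succ, pow_succ]
      ring

theorem sum_range_neg_one_pow_mul_choose_mul_bernoulliChooseSum (b N : ℕ) {m T : ℕ}
    (hm : m < T) :
    ∑ j ∈ range T, (-1) ^ j * (m.choose j : ℚ) * bernoulliChooseSum b N j =
      (-1) ^ m * if m ≤ N then ((N - m + b).choose (N - m) : ℚ) * bernoulli (N - m) else 0 := by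
  have binomial : ∑ j ∈ range T, ((-1) ^ j * m.choose j : ℚ) • (1 + X : ℚ⟦X⟧) ^ j =
      (-1 : ℚ) ^ m • X ^ m := by
    calc _ = ∑ j ∈ range (m + 1), ((-1) ^ j * m.choose j : ℚ) • (1 + X : ℚ⟦X⟧) ^ j := by
          refine (sum_subset (range_subset_range.2 hm) fun j _ hj => ?_).symm
          rw [Nat.choose_eq_zero_of_lt (by simpa using hj)]
          simp
      _ = (-(1 + X) + 1 : ℚ⟦X⟧) ^ m := by
          rw [add_pow]
          refine sum_congr rfl fun j _ => ?_
          rw [neg_pow (1 + X : ℚ⟦X⟧), one_pow, mul_one, smul_eq_C_mul, map_mul, map_pow,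
            map_neg, map_one, map_natCast]
          ring
      _ = _ := by
          rw [smul_eq_C_mul, map_pow, map_neg, map_one, ← neg_pow]
          ring
  have := congrArg (fun p => coeff N (shiftedBernoulliSeries b * p)) binomial
  simp only [mul_sum, mul_smul_comm, map_sum, map_smul, smul_eq_mul, coeff_mul_X_pow'] at this
  simpa [bernoulliChooseSum_eq_coeff, shiftedBernoulliSeries] using this

theorem sum_choose_add_choose_mul_bernoulliChooseSum {K s t : ℕ} (hs : 1 ≤ s) (hsK : s ≤ K - 1)
    (ht : 1 ≤ t) (htK : t ≤ K - 1) :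
    ∑ r ∈ Icc 1 (K - 1), (((2 * K - 2 * t).choose (2 * r - 1)
        + (2 * K - 2 * t).choose (2 * K - 2 * r) : ℕ) : ℚ)
          * bernoulliChooseSum (2 * s - 2) (2 * K + 1 - 2 * s) (2 * r - 1)
      = if s = t then (2 * (s : ℚ) - 1) / 2 else 0 := by
  set m := 2 * K - 2 * t
  set G := bernoulliChooseSum (2 * s - 2) (2 * K + 1 - 2 * s)
  set F : ℕ → ℚ := fun j => (m.choose j : ℚ) * G j with hF
  have hN : Odd (2 * K + 1 - 2 * s) := ⟨K - s, by omega⟩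
  have reflect : ∀ r ∈ Icc 1 (K - 1), G (2 * r - 1) = -G (2 * K - 2 * r) := fun r hr => by
    rw [mem_Icc] at hr
    dsimp only [G]
    rw [bernoulliChooseSum_reflect _ _ _ (by omega), hN.neg_one_pow,
      show 2 * K + 1 - 2 * s + (2 * s - 2) - (2 * r - 1) = 2 * K - 2 * r by omega, neg_one_mul]
  have hF0 : F 0 = 0 := by
    simp [hF, G, bernoulliChooseSum_zero_right, bernoulli_eq_zero_of_odd hN (by omega)]
  have hFlast : F (2 * K - 1) = 0 := by
    simp [hF, Nat.choose_eq_zero_of_lt (show m < 2 * K - 1 by omega)]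
  calc _ = ∑ r ∈ Icc 1 (K - 1), (F (2 * r - 1) - F (2 * K - 2 * r)) :=
        sum_congr rfl fun r hr => by
          simp only [hF]
          rw [reflect r hr]
          push_cast
          ring
    _ = -∑ j ∈ range (2 * K), (-1) ^ j * (m.choose j : ℚ) * G j := by
        rw [sum_Icc_sub_reflect_eq_neg_sum_range_neg_one_pow_mul F (by omega) hF0 hFlast]
        simp only [hF, mul_assoc]
    _ = _ := by
        rw [sum_range_neg_one_pow_mul_choose_mul_bernoulliChooseSum _ _ (by omega),
          (show Even m from ⟨K - t, by omega⟩).neg_one_pow, one_mul]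
        rcases lt_trichotomy s t with hst | rfl | hst
        · rw [if_pos (by omega), if_neg hst.ne,
            bernoulli_eq_zero_of_odd ⟨t - s, by omega⟩ (by omega)]
          simp
        · rw [if_pos (by omega), if_pos rfl, show 2 * K + 1 - 2 * s - m = 1 by omega,
            show 1 + (2 * s - 2) = 2 * s - 1 by omega, Nat.choose_one_right, bernoulli_one,
            Nat.cast_sub (by omega)]
          push_cast
          ring
        · rw [if_neg (by omega), if_neg hst.ne']
          simp

def doubleZetaCoeff (K r s : ℕ) : ℚ :=
  2 / (2 * s - 1) * bernoulliChooseSum (2 * s - 2) (2 * K + 1 - 2 * s) (2 * r - 1)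

theorem sum_doubleZetaCoeff_mul_choose_add_choose {K s t : ℕ} (hs : 1 ≤ s) (hsK : s ≤ K - 1)
    (ht : 1 ≤ t) (htK : t ≤ K - 1) :
    ∑ r ∈ Icc 1 (K - 1), doubleZetaCoeff K r s *
        (((2 * K - 2 * t).choose (2 * r - 1) + (2 * K - 2 * t).choose (2 * K - 2 * r) : ℕ) : ℚ)
      = if s = t then 1 else 0 := by
  have hden : (2 * (s : ℚ) - 1) ≠ 0 := by
    have : (1 : ℚ) ≤ s := by exact_mod_cast hs
    linarith
  calc
    _ = 2 / (2 * s - 1) * ∑ r ∈ Icc 1 (K - 1), (((2 * K - 2 * t).choose (2 * r - 1)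
          + (2 * K - 2 * t).choose (2 * K - 2 * r) : ℕ) : ℚ)
            * bernoulliChooseSum (2 * s - 2) (2 * K + 1 - 2 * s) (2 * r - 1) := by
      rw [mul_sum]
      exact sum_congr rfl fun r _ => by rw [doubleZetaCoeff]; ring
    _ = _ := by
      rw [sum_choose_add_choose_mul_bernoulliChooseSum hs hsK ht htK]
      split_ifs
      · field_simp
      · rw [mul_zero]

theorem sum_mul_eq_add_of_row_inverse {ι R : Type*} [CommSemiring R] [DecidableEq ι]
    {S : Finset ι} {s : ι} (hs : s ∈ S) {c : ι → ι → R} {d q x y : ι → R} {z : R}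
    (hy : ∀ r ∈ S, y r = ∑ t ∈ S, c t r * x t + q r * z)
    (hdc : ∀ t ∈ S, ∑ r ∈ S, d r * c t r = if s = t then 1 else 0) :
    ∑ r ∈ S, d r * y r = x s + (∑ r ∈ S, d r * q r) * z := by
  calc ∑ r ∈ S, d r * y r = ∑ r ∈ S, (∑ t ∈ S, d r * c t r * x t + d r * q r * z) :=
        sum_congr rfl fun r hr => by
          rw [hy r hr, mul_add, mul_sum]
          simp only [mul_assoc]
    _ = ∑ t ∈ S, (∑ r ∈ S, d r * c t r) * x t + (∑ r ∈ S, d r * q r) * z := by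
        rw [sum_add_distrib, sum_comm, ← sum_mul]
        simp only [sum_mul]
    _ = x s + (∑ r ∈ S, d r * q r) * z := by
        rw [sum_congr rfl fun t ht => by rw [hdc t ht, ite_mul, one_mul, zero_mul], sum_ite_eq,
          if_pos hs]

theorem zeta_product_in_terms_of_double_zeta_general (K : ℕ)
    (hyp : ∀ r : ℕ, 1 ≤ r → r ≤ K - 1 → ∃ q : ℚ,
      doubleZetaValue (2 * r) (2 * K + 1 - 2 * r) =
        (∑ s ∈ Finset.Icc 1 (K - 1),
          ((Nat.choose (2 * K - 2 * s) (2 * r - 1)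
              + Nat.choose (2 * K - 2 * s) (2 * K - 2 * r) : ℕ) : ℝ)
            * (riemannZetaValue (2 * s) * riemannZetaValue (2 * K + 1 - 2 * s)))
        + (q : ℝ) * riemannZetaValue (2 * K + 1)) :
    ∀ s : ℕ, 1 ≤ s → s ≤ K - 1 → ∃ q : ℚ,
      riemannZetaValue (2 * s) * riemannZetaValue (2 * K + 1 - 2 * s) =
        (∑ r ∈ Finset.Icc 1 (K - 1),
          (((2 / (2 * (s : ℚ) - 1)) * ∑ n ∈ Finset.range (2 * K + 1 - 2 * s + 1),
            (Nat.choose (2 * r - 1) (2 * K + 1 - 2 * s - n) : ℚ)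
              * (Nat.choose (n + 2 * s - 2) n : ℚ) * bernoulli n : ℚ) : ℝ)
            * doubleZetaValue (2 * r) (2 * K + 1 - 2 * r))
        + (q : ℝ) * riemannZetaValue (2 * K + 1) := by
  intro s hs hsK
  choose! q hq using hyp
  have hcoeff : ∀ r, 2 / (2 * (s : ℚ) - 1) * ∑ n ∈ range (2 * K + 1 - 2 * s + 1),
      ((2 * r - 1).choose (2 * K + 1 - 2 * s - n) : ℚ) * ((n + 2 * s - 2).choose n : ℚ)
        * bernoulli n = doubleZetaCoeff K r s := fun r => by
    simp only [doubleZetaCoeff, bernoulliChooseSum,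
      show ∀ n, n + 2 * s - 2 = n + (2 * s - 2) by omega]
  have hinverse : ∀ t ∈ Icc 1 (K - 1), ∑ r ∈ Icc 1 (K - 1), (doubleZetaCoeff K r s : ℝ) *
      (((2 * K - 2 * t).choose (2 * r - 1) + (2 * K - 2 * t).choose (2 * K - 2 * r) : ℕ) : ℝ)
        = if s = t then 1 else 0 := fun t ht => by
    rw [mem_Icc] at ht
    convert congrArg (Rat.cast : ℚ → ℝ)
      (sum_doubleZetaCoeff_mul_choose_add_choose hs hsK ht.1 ht.2) using 1
    · push_cast
      rfl
    · split_ifs <;> simp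
  refine ⟨-∑ r ∈ Icc 1 (K - 1), doubleZetaCoeff K r s * q r, ?_⟩
  simp only [hcoeff]
  rw [sum_mul_eq_add_of_row_inverse (mem_Icc.2 ⟨hs, hsK⟩)
    (fun r hr => hq r (mem_Icc.1 hr).1 (mem_Icc.1 hr).2) hinverse]
  push_cast
  ring

/-- **Expressing products of zeta values by double zeta values of odd weight.**
Let `k = 2K+1 ≥ 5` be odd.  If the parity theorem holds, i.e. for every `1 ≤ r ≤ K-1`
there is `q_r ∈ ℚ` with
`ζ(2r, k-2r) = ∑_{s=1}^{K-1} [C(2K-2s,2r-1) + C(2K-2s,2K-2r)]·ζ(2s)ζ(k-2s) + q_r·ζ(k)`,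
then for every `1 ≤ s ≤ K-1` there is `q ∈ ℚ` with
`ζ(2s)ζ(k-2s) = ∑_{r=1}^{K-1} d_{r,s}·ζ(2r, k-2r) + q·ζ(k)`, where
`d_{r,s} = (2/(2s-1)) · ∑_{n=0}^{k-2s} C(2r-1, k-2s-n)·C(n+2s-2, n)·B_n`. -/
theorem zeta_product_in_terms_of_double_zeta (K : ℕ) (hK : 2 ≤ K)
    (hyp : ∀ r : ℕ, 1 ≤ r → r ≤ K - 1 → ∃ q : ℚ,
      doubleZetaValue (2 * r) (2 * K + 1 - 2 * r) =
        (∑ s ∈ Finset.Icc 1 (K - 1),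
          ((Nat.choose (2 * K - 2 * s) (2 * r - 1)
              + Nat.choose (2 * K - 2 * s) (2 * K - 2 * r) : ℕ) : ℝ)
            * (riemannZetaValue (2 * s) * riemannZetaValue (2 * K + 1 - 2 * s)))
        + (q : ℝ) * riemannZetaValue (2 * K + 1)) :
    ∀ s : ℕ, 1 ≤ s → s ≤ K - 1 → ∃ q : ℚ,
      riemannZetaValue (2 * s) * riemannZetaValue (2 * K + 1 - 2 * s) =
        (∑ r ∈ Finset.Icc 1 (K - 1),
          (((2 / (2 * (s : ℚ) - 1)) * ∑ n ∈ Finset.range (2 * K + 1 - 2 * s + 1),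
            (Nat.choose (2 * r - 1) (2 * K + 1 - 2 * s - n) : ℚ)
              * (Nat.choose (n + 2 * s - 2) n : ℚ) * bernoulli n : ℚ) : ℝ)
            * doubleZetaValue (2 * r) (2 * K + 1 - 2 * r))
        + (q : ℝ) * riemannZetaValue (2 * K + 1) :=
  zeta_product_in_terms_of_double_zeta_general K hyp
end

section
/- Let k = 2K+1 ≥ 5 be an odd integer and let i be an integer with 0 ≤ i ≤ k-2. Then for all real numbers x and y, F_k^{(i)}(x+y, x) + F_k^{(i)}(x+y, y) = R_k^{(i)}(x, y). -/
/-!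
Completing `F` by its missing term `s = K`, whose coefficient is `(k-2-2i)/(k-2)`, absorbs the
`x^{k-2}, y^{k-2}` terms of `R`. Expanding the coefficients of the completed polynomial and
collecting by `C(i, j)` turns its symmetrization into `∑ⱼ C(i, j) Φⱼ` with
`Φⱼ = Fcomponent K j = (-(x+y))^j (x^{k-2-j} + y^{k-2-j})`, and the binomial theorem then
gives the two remaining monomials of `R`. For even `j` only the `B₁` term of `Φⱼ` survives,
odd Bernoulli numbers being zero; for odd `j`, `Φⱼ` is the even-index half of
`∑ₙ C(M,n) Bₙ (x+y)^n (x^{M-n} + y^{M-n})`, which vanishes for odd `M` because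
`B_M(1 - t) = -B_M(t)`.
-/

/-- `F_k^{(i)}(x,y)` for `k = 2K+1`:
`∑_{s=1}^{K-1} ((-2/(2s-1)) · ∑_{n=0}^{k-2s} C(i,k-2s-n)·C(n+2s-2,n)·B_n) · x^{2K-2s} y^{2s-1}`. -/
noncomputable def Fpoly (K i : ℕ) (x y : ℝ) : ℝ :=
  ∑ s ∈ Finset.Icc 1 (K - 1),
    (((-2 / (2 * (s : ℚ) - 1)) * ∑ n ∈ Finset.range (2 * K + 1 - 2 * s + 1),
        (Nat.choose i (2 * K + 1 - 2 * s - n) : ℚ)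
          * (Nat.choose (n + 2 * s - 2) n : ℚ) * bernoulli n : ℚ) : ℝ)
      * x ^ (2 * K - 2 * s) * y ^ (2 * s - 1)

/-- `R_k^{(i)}(x,y) = -((k-2-2i)/(k-2))x^{k-2} + (-1)^i x^{k-2-i} y^i
+ (-1)^i x^i y^{k-2-i} - ((k-2-2i)/(k-2))y^{k-2}`. -/
noncomputable def Rpoly (k i : ℕ) (x y : ℝ) : ℝ :=
  -(((k : ℝ) - 2 - 2 * (i : ℝ)) / ((k : ℝ) - 2)) * x ^ (k - 2)
    + (-1) ^ i * x ^ (k - 2 - i) * y ^ i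
    + (-1) ^ i * x ^ i * y ^ (k - 2 - i)
    - (((k : ℝ) - 2 - 2 * (i : ℝ)) / ((k : ℝ) - 2)) * y ^ (k - 2)

open Finset

section BernoulliSums

variable {F : Type*} [Field F] [CharZero F]

theorem Polynomial.bernoulli_aeval_eq_sum (M : ℕ) (t : F) :
    Polynomial.aeval t (Polynomial.bernoulli M)
      = ∑ n ∈ range (M + 1), (M.choose n : F) * _root_.bernoulli n * t ^ (M - n) := by
  simp only [Polynomial.bernoulli, map_sum, Polynomial.aeval_monomial, eq_ratCast]
  push_cast
  exact sum_congr rfl fun n _ => by ring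

theorem Polynomial.bernoulli_aeval_one_sub (M : ℕ) (t : F) :
    Polynomial.aeval (1 - t) (Polynomial.bernoulli M)
      = (-1) ^ M * Polynomial.aeval t (Polynomial.bernoulli M) := by
  simpa [Polynomial.aeval_comp] using
    congrArg (Polynomial.aeval t) (Polynomial.bernoulli_comp_one_sub_X M)

theorem sum_choose_bernoulli_mul_pow_mul_pow_eq_pow_mul_aeval {z : F} (hz : z ≠ 0) (M : ℕ)
    (w : F) :
    ∑ n ∈ range (M + 1), (M.choose n : F) * bernoulli n * z ^ n * w ^ (M - n)
      = z ^ M * Polynomial.aeval (w / z) (Polynomial.bernoulli M) := by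
  rw [Polynomial.bernoulli_aeval_eq_sum, mul_sum]
  refine sum_congr rfl fun n hn => ?_
  rw [← pow_mul_pow_sub z (Nat.lt_succ_iff.mp (mem_range.mp hn)), div_pow]
  field_simp

theorem sum_choose_bernoulli_mul_pow_add_pow_eq_zero {M : ℕ} (hM : Odd M) (x y : F) :
    ∑ n ∈ range (M + 1),
      (M.choose n : F) * bernoulli n * (x + y) ^ n * (x ^ (M - n) + y ^ (M - n)) = 0 := by
  rcases eq_or_ne (x + y) 0 with hz | hz
  · rw [sum_eq_single 0 (fun n _ hn => by simp [hz, zero_pow hn]) (by simp)]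
    simp [eq_neg_of_add_eq_zero_right hz, hM.neg_pow]
  · have hy : y / (x + y) = 1 - x / (x + y) := by field_simp; ring
    simp only [mul_add, sum_add_distrib, sum_choose_bernoulli_mul_pow_mul_pow_eq_pow_mul_aeval hz,
      hy, Polynomial.bernoulli_aeval_one_sub, hM.neg_one_pow]
    ring

theorem sum_range_two_mul {M : Type*} [AddCommMonoid M] (f : ℕ → M) (m : ℕ) :
    ∑ n ∈ range (2 * m), f n = ∑ u ∈ range m, (f (2 * u) + f (2 * u + 1)) := by
  induction m with
  | zero => simp
  | succ m ih => rw [mul_add, sum_range_succ, sum_range_succ, sum_range_succ, ih, add_assoc]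

theorem sum_even_choose_bernoulli_mul_pow_add_pow (L : ℕ) (x y : F) :
    ∑ u ∈ range (L + 1), ((2 * L + 1).choose (2 * u) : F) * bernoulli (2 * u)
        * (x + y) ^ (2 * u) * (x ^ (2 * L + 1 - 2 * u) + y ^ (2 * L + 1 - 2 * u))
      = (2 * L + 1) / 2 * (x + y) * (x ^ (2 * L) + y ^ (2 * L)) := by
  set T : ℕ → F := fun n => ((2 * L + 1).choose n : F) * bernoulli n * (x + y) ^ n
    * (x ^ (2 * L + 1 - n) + y ^ (2 * L + 1 - n))
  show ∑ u ∈ range (L + 1), T (2 * u) = _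
  have hsum : ∑ u ∈ range (L + 1), T (2 * u) + ∑ u ∈ range (L + 1), T (2 * u + 1) = 0 := by
    rw [← sum_add_distrib, ← sum_range_two_mul, show 2 * (L + 1) = 2 * L + 1 + 1 by ring]
    exact sum_choose_bernoulli_mul_pow_add_pow_eq_zero (odd_two_mul_add_one L) x y
  have hodd : ∑ u ∈ range (L + 1), T (2 * u + 1) = T 1 := by
    refine sum_eq_single_of_mem 0 (by simp) fun u _ hu => ?_
    simp [T, bernoulli_eq_zero_of_odd (odd_two_mul_add_one u) (by omega)]
  have hT1 : T 1 = -((2 * L + 1) / 2 * (x + y) * (x ^ (2 * L) + y ^ (2 * L))) := by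
    simp only [T, Nat.choose_one_right, bernoulli_one, pow_one, add_tsub_cancel_right]
    push_cast
    ring
  linear_combination hsum - hodd - hT1

end BernoulliSums

theorem sum_range_choose_mul_pow_mul_pow {R : Type*} [CommSemiring R] {i m : ℕ} (hi : i ≤ m)
    (a b : R) :
    ∑ j ∈ range (m + 1), (i.choose j : R) * a ^ j * b ^ (m - j)
      = (a + b) ^ i * b ^ (m - i) := by
  rw [← sum_subset (range_subset_range.mpr (Nat.succ_le_succ hi)) fun j _ hj => by
      rw [Nat.choose_eq_zero_of_lt (by simpa using hj)]; simp,
    add_pow, sum_mul]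
  refine sum_congr rfl fun j hj => ?_
  rw [← pow_mul_pow_sub b (show i - j ≤ m - j by omega),
    show m - j - (i - j) = m - i by have := mem_range.mp hj; omega]
  ring

theorem Nat.cast_choose_div_sub {F : Type*} [Field F] [CharZero F] {n k : ℕ} (hk : k ≤ n) :
    (n.choose k : F) / (n + 1 - k) = (n + 1).choose k / (n + 1) := by
  have h := congrArg (Nat.cast (R := F)) (Nat.choose_mul_succ_eq n k)
  rw [Nat.cast_mul, Nat.cast_mul, Nat.cast_sub (by omega)] at h
  have hpos : (n : F) + 1 - k ≠ 0 := by
    rw [← Nat.cast_one, ← Nat.cast_add, ← Nat.cast_sub (by omega)]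
    exact Nat.cast_ne_zero.mpr (by omega)
  rw [div_eq_div_iff hpos (Nat.cast_add_one_ne_zero n)]
  push_cast at h
  linear_combination h

def Fcoeff (K i s : ℕ) : ℚ :=
  (-2 / (2 * (s : ℚ) - 1)) * ∑ n ∈ range (2 * K + 1 - 2 * s + 1),
    (Nat.choose i (2 * K + 1 - 2 * s - n) : ℚ) * (Nat.choose (n + 2 * s - 2) n : ℚ)
      * bernoulli n

noncomputable def FpolyFull (K i : ℕ) (x y : ℝ) : ℝ :=
  ∑ s ∈ Icc 1 K, (Fcoeff K i s : ℝ) * x ^ (2 * K - 2 * s) * y ^ (2 * s - 1)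

theorem Fpoly_eq_FpolyFull_sub {K : ℕ} (hK : 1 ≤ K) (i : ℕ) (x y : ℝ) :
    Fpoly K i x y = FpolyFull K i x y - Fcoeff K i K * y ^ (2 * K - 1) := by
  obtain ⟨L, rfl⟩ : ∃ L, K = L + 1 := ⟨K - 1, by omega⟩
  rw [FpolyFull, sum_Icc_succ_top (by omega), Nat.sub_self, pow_zero, mul_one,
    add_sub_cancel_right]
  rfl

theorem Fcoeff_self {K : ℕ} (hK : 1 ≤ K) (i : ℕ) :
    Fcoeff K i K = (2 * K - 1 - 2 * i) / (2 * K - 1) := by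
  have hK' : (2 * K - 1 : ℚ) ≠ 0 := by
    have : (1 : ℚ) ≤ K := by exact_mod_cast hK
    linarith
  rw [Fcoeff, show 2 * K + 1 - 2 * K + 1 = 2 by omega, sum_range_succ, sum_range_one,
    show 2 * K + 1 - 2 * K - 0 = 1 by omega, show 2 * K + 1 - 2 * K - 1 = 0 by omega,
    show 1 + 2 * K - 2 = 2 * K - 1 by omega]
  simp only [Nat.choose_one_right, Nat.choose_zero_right, bernoulli_zero, bernoulli_one,
    Nat.cast_sub (show 1 ≤ 2 * K by omega)]
  push_cast
  field_simp
  ring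

-- The `(s, n)` term of `Fcoeff K i s * (x + y) ^ (2K - 2s) * (x ^ (2s - 1) + y ^ (2s - 1))`,
-- indexed by `j = 2K + 1 - 2s - n` and stripped of its factor `C(i, j)`.
noncomputable def Fterm (K j s : ℕ) (x y : ℝ) : ℝ :=
  -2 / (2 * (s : ℝ) - 1) * ((2 * K - 1 - j).choose (2 * K + 1 - 2 * s - j) : ℝ)
    * bernoulli (2 * K + 1 - 2 * s - j) * (x + y) ^ (2 * K - 2 * s)
    * (x ^ (2 * s - 1) + y ^ (2 * s - 1))

noncomputable def Fcomponent (K j : ℕ) (x y : ℝ) : ℝ :=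
  ∑ s ∈ Icc 1 ((2 * K + 1 - j) / 2), Fterm K j s x y

theorem FpolyFull_add_eq_sum_choose_mul_Fcomponent (K i : ℕ) (x y : ℝ) :
    FpolyFull K i (x + y) x + FpolyFull K i (x + y) y
      = ∑ j ∈ range (2 * K), (i.choose j : ℝ) * Fcomponent K j x y := by
  have hreflect : ∀ s ∈ Icc 1 K,
      (Fcoeff K i s : ℝ) * (x + y) ^ (2 * K - 2 * s) * (x ^ (2 * s - 1) + y ^ (2 * s - 1))
        = ∑ j ∈ range (2 * K + 1 - 2 * s + 1), (i.choose j : ℝ) * Fterm K j s x y := by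
    intro s hs
    obtain ⟨hs1, hsK⟩ := mem_Icc.mp hs
    rw [← sum_range_reflect, Fcoeff]
    push_cast
    simp only [mul_sum, sum_mul]
    refine sum_congr rfl fun n hn => ?_
    have hn := mem_range.mp hn
    rw [Fterm, show 2 * K + 1 - 2 * s - (2 * K + 1 - 2 * s - n) = n by omega,
      show 2 * K - 1 - (2 * K + 1 - 2 * s - n) = n + 2 * s - 2 by omega]
    ring
  calc FpolyFull K i (x + y) x + FpolyFull K i (x + y) y
      = ∑ s ∈ Icc 1 K,
          (Fcoeff K i s : ℝ) * (x + y) ^ (2 * K - 2 * s)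
            * (x ^ (2 * s - 1) + y ^ (2 * s - 1)) := by
        rw [FpolyFull, FpolyFull, ← sum_add_distrib]
        exact sum_congr rfl fun _ _ => by ring
    _ = ∑ s ∈ Icc 1 K, ∑ j ∈ range (2 * K + 1 - 2 * s + 1),
          (i.choose j : ℝ) * Fterm K j s x y :=
        sum_congr rfl hreflect
    _ = ∑ j ∈ range (2 * K), ∑ s ∈ Icc 1 ((2 * K + 1 - j) / 2),
          (i.choose j : ℝ) * Fterm K j s x y :=
        sum_comm' fun s j => by simp only [mem_Icc, mem_range]; omega
    _ = _ := by simp only [Fcomponent, mul_sum]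

theorem Fcomponent_two_mul {K v : ℕ} (hv : v < K) (x y : ℝ) :
    Fcomponent K (2 * v) x y
      = (x + y) ^ (2 * v) * (x ^ (2 * K - 1 - 2 * v) + y ^ (2 * K - 1 - 2 * v)) := by
  obtain ⟨w, rfl⟩ : ∃ w, K = v + w + 1 := ⟨K - v - 1, by omega⟩
  rw [Fcomponent, show (2 * (v + w + 1) + 1 - 2 * v) / 2 = w + 1 by omega,
    sum_eq_single_of_mem (w + 1) (by simp)]
  · rw [Fterm, show 2 * (v + w + 1) + 1 - 2 * (w + 1) - 2 * v = 1 by omega,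
      show 2 * (v + w + 1) - 1 - 2 * v = 2 * w + 1 by omega,
      show 2 * (v + w + 1) - 2 * (w + 1) = 2 * v by omega,
      show 2 * (w + 1) - 1 = 2 * w + 1 by omega]
    simp only [Nat.choose_one_right, bernoulli_one]
    push_cast
    rw [show 2 * ((w : ℝ) + 1) - 1 = 2 * w + 1 by ring]
    field_simp
  · intro s hs hsw
    obtain ⟨hs1, hsw'⟩ := mem_Icc.mp hs
    rw [Fterm, bernoulli_eq_zero_of_odd ⟨w - s + 1, by omega⟩ (by omega)]
    simp

theorem Fcomponent_two_mul_add_one {K t : ℕ} (ht : t < K) (x y : ℝ) :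
    Fcomponent K (2 * t + 1) x y
      = -((x + y) ^ (2 * t + 1)
          * (x ^ (2 * K - 1 - (2 * t + 1)) + y ^ (2 * K - 1 - (2 * t + 1)))) := by
  obtain ⟨L, rfl⟩ : ∃ L, K = t + L + 1 := ⟨K - t - 1, by omega⟩
  have hterm : ∀ u ∈ range (L + 1), Fterm (t + L + 1) (2 * t + 1) (L + 1 - u) x y
      = -2 / (2 * L + 1) * (x + y) ^ (2 * t) * (((2 * L + 1).choose (2 * u) : ℝ)
          * bernoulli (2 * u) * (x + y) ^ (2 * u)
          * (x ^ (2 * L + 1 - 2 * u) + y ^ (2 * L + 1 - 2 * u))) := by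
    intro u hu
    have hu := mem_range.mp hu
    rw [Fterm, show 2 * (t + L + 1) + 1 - 2 * (L + 1 - u) - (2 * t + 1) = 2 * u by omega,
      show 2 * (t + L + 1) - 1 - (2 * t + 1) = 2 * L by omega,
      show 2 * (t + L + 1) - 2 * (L + 1 - u) = 2 * t + 2 * u by omega,
      show 2 * (L + 1 - u) - 1 = 2 * L + 1 - 2 * u by omega, Nat.cast_sub (by omega : u ≤ L + 1)]
    have hc := Nat.cast_choose_div_sub (F := ℝ) (show 2 * u ≤ 2 * L by omega)
    push_cast at hc
    have hcoeff : -2 / (2 * (((L + 1 : ℕ) : ℝ) - u) - 1) * ((2 * L).choose (2 * u) : ℝ)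
        = -2 / (2 * L + 1) * ((2 * L + 1).choose (2 * u) : ℝ) := by
      rw [show 2 * (((L + 1 : ℕ) : ℝ) - u) - 1 = 2 * L + 1 - 2 * u by push_cast; ring,
        div_mul_comm, hc]
      ring
    rw [hcoeff, pow_add]
    ring
  have hreflect : ∑ s ∈ Icc 1 (L + 1), Fterm (t + L + 1) (2 * t + 1) s x y
      = ∑ u ∈ range (L + 1), Fterm (t + L + 1) (2 * t + 1) (L + 1 - u) x y :=
    sum_nbij' (fun s => L + 1 - s) (fun u => L + 1 - u)
      (fun s hs => by simp only [mem_Icc, mem_range] at hs ⊢; omega)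
      (fun u hu => by simp only [mem_Icc, mem_range] at hu ⊢; omega)
      (fun s hs => by simp only [mem_Icc] at hs; omega)
      (fun u hu => by simp only [mem_range] at hu; omega)
      (fun s hs => by simp only [mem_Icc] at hs; congr 1; omega)
  rw [Fcomponent, show (2 * (t + L + 1) + 1 - (2 * t + 1)) / 2 = L + 1 by omega, hreflect,
    sum_congr rfl hterm, ← mul_sum, sum_even_choose_bernoulli_mul_pow_add_pow,
    show 2 * (t + L + 1) - 1 - (2 * t + 1) = 2 * L by omega]
  field_simp
  ring

theorem Fcomponent_eq {K j : ℕ} (hj : j < 2 * K) (x y : ℝ) :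
    Fcomponent K j x y = (-(x + y)) ^ j * (x ^ (2 * K - 1 - j) + y ^ (2 * K - 1 - j)) := by
  obtain ⟨v, rfl | rfl⟩ := Nat.even_or_odd' j
  · rw [Fcomponent_two_mul (by omega), Even.neg_pow (even_two_mul v)]
  · rw [Fcomponent_two_mul_add_one (by omega), Odd.neg_pow (odd_two_mul_add_one v)]
    ring

theorem FpolyFull_functional_equation {K i : ℕ} (hi : i < 2 * K) (x y : ℝ) :
    FpolyFull K i (x + y) x + FpolyFull K i (x + y) y
      = (-1) ^ i * (x ^ (2 * K - 1 - i) * y ^ i + x ^ i * y ^ (2 * K - 1 - i)) := by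
  have hsplit : ∀ j ∈ range (2 * K), (i.choose j : ℝ) * Fcomponent K j x y
      = i.choose j * (-(x + y)) ^ j * x ^ (2 * K - 1 - j)
        + i.choose j * (-(x + y)) ^ j * y ^ (2 * K - 1 - j) := fun j hj => by
    rw [Fcomponent_eq (mem_range.mp hj)]
    ring
  rw [FpolyFull_add_eq_sum_choose_mul_Fcomponent, sum_congr rfl hsplit, sum_add_distrib,
    show range (2 * K) = range (2 * K - 1 + 1) by congr 1; omega,
    sum_range_choose_mul_pow_mul_pow (by omega : i ≤ 2 * K - 1),
    sum_range_choose_mul_pow_mul_pow (by omega : i ≤ 2 * K - 1),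
    show -(x + y) + x = -y by ring, show -(x + y) + y = -x by ring, neg_pow y, neg_pow x]
  ring

/-- **Main functional equation for `F`.**
For odd `k = 2K+1 ≥ 5` and `0 ≤ i ≤ k-2`, one has
`F_k^{(i)}(x+y, x) + F_k^{(i)}(x+y, y) = R_k^{(i)}(x, y)` for all real `x, y`. -/
theorem Fpoly_functional_equation (K i : ℕ) (hK : 2 ≤ K) (hi : i ≤ 2 * K + 1 - 2) :
    ∀ x y : ℝ, Fpoly K i (x + y) x + Fpoly K i (x + y) y = Rpoly (2 * K + 1) i x y := by
  intro x y
  have hK1 : 1 ≤ K := by omega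
  rw [Fpoly_eq_FpolyFull_sub hK1, Fpoly_eq_FpolyFull_sub hK1, sub_add_sub_comm,
    FpolyFull_functional_equation (by omega), Fcoeff_self hK1, Rpoly,
    show 2 * K + 1 - 2 = 2 * K - 1 by omega]
  push_cast
  ring
end

section
/- Let k = 2K+1 ≥ 5 be an odd integer and let i be an integer with 0 ≤ i ≤ k-2. Then for every fixed real number x, the second derivative with respect to y of the function y ↦ G_k^{(i)}(x, y) equals (k-2-i)(k-3-i) · G_{k-2}^{(i)}(x, y) - 2i(k-2-i) · F_{k-2}^{(k-3-i)}(x, y) + i(i-1) · G_{k-2}^{(i-2)}(x, y), where any term whose scalar coefficient vanishes (in particular those with superscript i-2 < 0 when i ≤ 1, or with superscript k-3-i out of range) is interpreted as zero. -/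
/-- `G_k^{(i)}(x,y)` for `k = 2K+1`:
`∑_{s=1}^{K-1} ((2/(2s-1)) · ∑_{n=0}^{k-2s} C(k-2-i,k-2s-n)·C(n+2s-2,n)·B_n) · x^{2K-2s} y^{2s-1}`. -/
noncomputable def Gpoly (K i : ℕ) (x y : ℝ) : ℝ :=
  ∑ s ∈ Finset.Icc 1 (K - 1),
    (((2 / (2 * (s : ℚ) - 1)) * ∑ n ∈ Finset.range (2 * K + 1 - 2 * s + 1),
        (Nat.choose (2 * K + 1 - 2 - i) (2 * K + 1 - 2 * s - n) : ℚ)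
          * (Nat.choose (n + 2 * s - 2) n : ℚ) * bernoulli n : ℚ) : ℝ)
      * x ^ (2 * K - 2 * s) * y ^ (2 * s - 1)

open Finset

lemma Nat.add_two_mul_add_one_mul_choose (j n : ℕ) :
    (j + 2) * (j + 1) * (n + j + 2).choose n = (n + j + 2) * (n + j + 1) * (n + j).choose n := by
  have h₁ := Nat.add_one_mul_choose_eq (n + j + 1) (j + 1)
  have h₂ := Nat.add_one_mul_choose_eq (n + j) j
  rw [show n + j + 2 = n + (j + 2) by ring, Nat.choose_symm_add, Nat.choose_symm_add]
  calc (j + 2) * (j + 1) * (n + (j + 2)).choose (j + 2)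
      = (j + 1) * ((n + j + 1 + 1) * (n + j + 1).choose (j + 1)) := by rw [h₁]; ring_nf
    _ = (n + (j + 2)) * ((n + j + 1) * (n + j).choose j) := by rw [h₂]; ring
    _ = _ := by ring

section

variable {R : Type*} [CommRing R]

lemma Nat.cast_mul_choose_sub_one (a m : ℕ) :
    (a : R) * ((a - 1).choose m : R) = (a - m) * a.choose m := by
  cases a with
  | zero => cases m <;> simp
  | succ b =>
    rcases le_or_gt m (b + 1) with h | h
    · have := congrArg (Nat.cast (R := R)) (Nat.choose_mul_succ_eq b m)
      push_cast [Nat.cast_sub h] at this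
      simp only [Nat.add_sub_cancel]
      push_cast
      linear_combination this
    · simp [Nat.choose_eq_zero_of_lt h, Nat.choose_eq_zero_of_lt (show b < m by omega)]

lemma Nat.cast_mul_mul_choose_sub_two (a m : ℕ) :
    (a : R) * (a - 1) * ((a - 2).choose m : R) = (a - m) * (a - m - 1) * a.choose m := by
  cases a with
  | zero => cases m <;> simp
  | succ b =>
    have h₁ := Nat.cast_mul_choose_sub_one (R := R) b m
    have h₂ := Nat.cast_mul_choose_sub_one (R := R) (b + 1) m
    rw [show b + 1 - 2 = b - 1 by omega]
    push_cast at h₁ h₂ ⊢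
    linear_combination ((b : R) + 1) * h₁ + ((b : R) - m) * h₂

lemma Nat.cast_choose_sub_two_add_choose_sub_one_add_choose (a i m : ℕ) :
    (a : R) * (a - 1) * ((a - 2).choose m : R) + 2 * i * a * ((a - 1).choose m : R)
        + i * (i - 1) * (a.choose m : R)
      = (a + i - m) * (a + i - m - 1) * a.choose m := by
  linear_combination Nat.cast_mul_mul_choose_sub_two (R := R) a m
    + 2 * (i : R) * Nat.cast_mul_choose_sub_one (R := R) a m

def binomConv (b : ℕ → R) (a r j : ℕ) : R :=
  ∑ n ∈ range (r + 1), (a.choose (r - n) : R) * ((n + j).choose n : R) * b n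

lemma binomConv_add_two (b : ℕ → R) {a i r j : ℕ} (h : r + j + 2 = a + i) :
    ((j : R) + 2) * (j + 1) * binomConv b a r (j + 2)
      = a * (a - 1) * binomConv b (a - 2) r j + 2 * i * a * binomConv b (a - 1) r j
        + i * (i - 1) * binomConv b a r j := by
  simp only [binomConv, mul_sum, ← sum_add_distrib]
  refine sum_congr rfl fun n hn => ?_
  have hnr : n ≤ r := Nat.lt_succ_iff.mp (mem_range.mp hn)
  have hpascal := congrArg (Nat.cast (R := R)) (Nat.add_two_mul_add_one_mul_choose j n)
  have hbinom := Nat.cast_choose_sub_two_add_choose_sub_one_add_choose (R := R) a i (r - n)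
  have hm : ((r - n : ℕ) : R) = a + i - n - j - 2 := by
    have hc := congrArg (Nat.cast (R := R)) h
    push_cast at hc
    rw [Nat.cast_sub hnr]; linear_combination hc
  rw [show n + (j + 2) = n + j + 2 by ring]
  push_cast at hpascal
  rw [hm] at hbinom
  linear_combination b n * ((a.choose (r - n) : R) * hpascal - ((n + j).choose n : R) * hbinom)

end

def oddForm (K : ℕ) (c : ℕ → ℝ) (x y : ℝ) : ℝ :=
  ∑ s ∈ Icc 1 (K - 1), c s * x ^ (2 * K - 2 * s) * y ^ (2 * s - 1)

lemma deriv_deriv_oddForm (K : ℕ) (c : ℕ → ℝ) (x y : ℝ) :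
    deriv (deriv fun t => oddForm K c x t) y
      = oddForm (K - 1) (fun s => (2 * s + 1) * (2 * s) * c (s + 1)) x y := by
  have h₁ : deriv (fun t => oddForm K c x t)
      = fun t => ∑ s ∈ Icc 1 (K - 1),
          c s * x ^ (2 * K - 2 * s) * ((2 * s - 1 : ℕ) * t ^ (2 * s - 2)) := by
    funext t
    refine (HasDerivAt.fun_sum fun s _ => (hasDerivAt_pow _ t).const_mul _).deriv.trans ?_
    simp only [Nat.sub_sub]
  have h₂ : deriv (deriv fun t => oddForm K c x t) y
      = ∑ s ∈ Icc 1 (K - 1),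
          c s * x ^ (2 * K - 2 * s) * ((2 * s - 1 : ℕ) * ((2 * s - 2 : ℕ) * y ^ (2 * s - 3))) := by
    rw [h₁]
    refine (HasDerivAt.fun_sum fun s _ =>
      ((hasDerivAt_pow _ y).const_mul _).const_mul _).deriv.trans ?_
    simp only [Nat.sub_sub]
  rw [h₂]
  rcases Nat.lt_or_ge K 2 with hK | hK
  · simp [oddForm, Icc_eq_empty_of_lt, show K - 1 < 1 by omega, show K - 1 - 1 < 1 by omega]
  obtain ⟨K, rfl⟩ : ∃ K', K = K' + 2 := ⟨K - 2, by omega⟩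
  simp only [show K + 2 - 1 = K + 1 by omega]
  rw [← insert_Icc_add_one_left_eq_Icc (show 1 ≤ K + 1 by omega), sum_insert (by simp),
    ← map_add_right_Icc 1 K 1, sum_map]
  simp only [oddForm, addRightEmbedding_apply, mul_one, Nat.sub_self, Nat.cast_zero, zero_mul,
    mul_zero, zero_add]
  refine sum_congr rfl fun s _ => ?_
  rw [show 2 * (K + 2) - 2 * (s + 1) = 2 * (K + 1) - 2 * s by omega,
    show 2 * (s + 1) - 1 = 2 * s + 1 by omega, show 2 * (s + 1) - 2 = 2 * s by omega,
    show 2 * (s + 1) - 3 = 2 * s - 1 by omega]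
  push_cast
  ring

def Gcoeff (K a s : ℕ) : ℚ :=
  2 / (2 * (s : ℚ) - 1) * binomConv bernoulli a (2 * K + 1 - 2 * s) (2 * s - 2)

lemma Gpoly_eq_oddForm (K i : ℕ) (x y : ℝ) :
    Gpoly K i x y = oddForm K (fun s => Gcoeff K (2 * K + 1 - 2 - i) s) x y := by
  refine sum_congr rfl fun s hs => ?_
  have hn : ∀ n, n + 2 * s - 2 = n + (2 * s - 2) := fun n => by grind
  simp only [hn]
  rfl

lemma Fpoly_eq_oddForm (K j : ℕ) (x y : ℝ) :
    Fpoly K j x y = oddForm K (fun s => -Gcoeff K j s) x y := by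
  refine sum_congr rfl fun s hs => ?_
  have hn : ∀ n, n + 2 * s - 2 = n + (2 * s - 2) := fun n => by grind
  simp only [hn, Gcoeff, binomConv, neg_div, neg_mul, Rat.cast_neg]

lemma Gcoeff_succ {K a i s : ℕ} (hs : 1 ≤ s) (hsK : s < K) (h : a + i = 2 * K - 1) :
    (2 * (s : ℚ) + 1) * (2 * s) * Gcoeff K a (s + 1)
      = a * (a - 1) * Gcoeff (K - 1) (a - 2) s + 2 * i * a * Gcoeff (K - 1) (a - 1) s
        + i * (i - 1) * Gcoeff (K - 1) a s := by
  have hconv := binomConv_add_two bernoulli (r := 2 * (K - 1) + 1 - 2 * s) (j := 2 * s - 2)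
    (show 2 * (K - 1) + 1 - 2 * s + (2 * s - 2) + 2 = a + i by omega)
  simp only [Gcoeff]
  rw [show 2 * K + 1 - 2 * (s + 1) = 2 * (K - 1) + 1 - 2 * s by omega,
    show 2 * (s + 1) - 2 = 2 * s - 2 + 2 by omega]
  push_cast [Nat.cast_sub (by omega : 2 ≤ 2 * s)] at hconv
  have hs' : (1 : ℚ) ≤ s := by exact_mod_cast hs
  have h₁ : (2 * (s : ℚ) - 1) ≠ 0 := by linarith
  have h₂ : (2 * ((s + 1 : ℕ) : ℚ) - 1) ≠ 0 := by push_cast; linarith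
  field_simp
  push_cast
  linear_combination (2 * (s : ℚ) + 1) * hconv

/-- **Second derivative of `G` in `y`.**
For odd `k = 2K+1 ≥ 5` and `0 ≤ i ≤ k-2`, for every fixed real `x`,
`∂²/∂y² G_k^{(i)}(x,y) = (k-2-i)(k-3-i)·G_{k-2}^{(i)}(x,y)
  - 2i(k-2-i)·F_{k-2}^{(k-3-i)}(x,y) + i(i-1)·G_{k-2}^{(i-2)}(x,y)`
(note `k-2 = 2(K-1)+1`; superscripts are truncated natural subtractions, which is
harmless since the corresponding scalar coefficients then vanish). -/
theorem Gpoly_second_deriv (K i : ℕ) (hK : 2 ≤ K) (hi : i ≤ 2 * K + 1 - 2) :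
    ∀ x y : ℝ, deriv (deriv (fun t : ℝ => Gpoly K i x t)) y =
      ((2 * K + 1 : ℝ) - 2 - (i : ℝ)) * ((2 * K + 1 : ℝ) - 3 - (i : ℝ))
          * Gpoly (K - 1) i x y
        - 2 * (i : ℝ) * ((2 * K + 1 : ℝ) - 2 - (i : ℝ))
          * Fpoly (K - 1) (2 * K + 1 - 3 - i) x y
        + (i : ℝ) * ((i : ℝ) - 1) * Gpoly (K - 1) (i - 2) x y := by
  intro x y
  obtain ⟨a, ha, hai⟩ : ∃ a, 2 * K + 1 - 2 - i = a ∧ a + i = 2 * K - 1 := ⟨_, rfl, by omega⟩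
  have hA : (2 * K + 1 : ℝ) - 2 - i = a := by
    rw [← ha, Nat.cast_sub (by omega), Nat.cast_sub (by omega)]; push_cast; ring
  -- for `i ≤ 1` the superscript `i - 2` truncates to `0`, but its coefficient `i(i-1)` vanishes
  have htrunc : ∀ s, (i : ℝ) * (i - 1) * Gcoeff (K - 1) (2 * (K - 1) + 1 - 2 - (i - 2)) s
      = i * (i - 1) * Gcoeff (K - 1) a s := by
    intro s
    rcases lt_or_ge i 2 with hi₂ | hi₂
    · interval_cases i <;> simp
    · rw [show 2 * (K - 1) + 1 - 2 - (i - 2) = a by omega]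
  simp only [Gpoly_eq_oddForm, Fpoly_eq_oddForm, deriv_deriv_oddForm]
  rw [show 2 * (K - 1) + 1 - 2 - i = a - 2 by omega, show 2 * K + 1 - 3 - i = a - 1 by omega, ha,
    show (2 * K + 1 : ℝ) - 3 - i = a - 1 by linarith]
  simp only [oddForm, hA, mul_sum, ← sum_sub_distrib, ← sum_add_distrib]
  refine sum_congr rfl fun s hs => ?_
  obtain ⟨hs₁, hsK⟩ := mem_Icc.mp hs
  have key := congrArg (Rat.cast (K := ℝ)) (Gcoeff_succ hs₁ (by omega) hai)
  push_cast at key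
  linear_combination (x ^ (2 * (K - 1) - 2 * s) * y ^ (2 * s - 1)) * (key - htrunc s)
end

section
/- Let k = 2K+1 ≥ 5 be an odd integer. Then for every integer s with 1 ≤ s ≤ K and every integer i (possibly negative), one has the Bernoulli number identity (-1) · ∑_{n=0}^{k-2s} Ch(i, k-2s-n) · C(n+2s-2, n) · B_n = ∑_{n=0}^{k-2s} Ch(k-2-i, k-2s-n) · C(n+2s-2, n) · B_n, where for an integer a and a natural number b, Ch(a, b) := a(a-1)⋯(a-b+1)/b! is the generalized binomial coefficient (Mathlib's `Ring.choose` over ℚ). -/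
/-!
With `P_m(x) = ∑_{n ≤ m} Ch(x, m-n) C(n+r, n) B_n` (`bernoulliBinomialSum r m x`), the two sides
are `-P_m(i)` and `P_m(m+r-i)` for `r = 2s-2` and the odd number `m = 2K+1-2s`, so it suffices
that `P_m(m+r-x) = (-1)^m P_m(x)` for all integers `x`. Pascal's rule gives
`P_{m+1}(x+1) - P_{m+1}(x) = P_m(x)`, so by induction on `m` the defect
`P_m(m+r-x) - (-1)^m P_m(x)` has zero increments on `ℤ` and is constant there; at `x = 0`
it vanishes because `∑_{n ≤ m} C(m, n) B_n = B'_m = (-1)^m B_m`.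
-/

open Finset

theorem Nat.add_choose_sub_mul_add_choose_s14 {r m n : ℕ} (h : n ≤ m) :
    (m + r).choose (m - n) * (n + r).choose n = (m + r).choose m * m.choose n := by
  obtain ⟨j, rfl⟩ := Nat.exists_eq_add_of_le h
  rw [Nat.add_sub_cancel_left, Nat.choose_symm_of_eq_add (show n + j + r = j + (n + r) by ring),
    Nat.choose_mul (Nat.le_add_right n r), Nat.choose_mul (Nat.le_add_right n j),
    show n + j + r - n = r + j by omega, Nat.add_sub_cancel_left, Nat.add_sub_cancel_left,
    Nat.choose_symm_add]

theorem sum_range_choose_mul_bernoulli (m : ℕ) :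
    ∑ n ∈ range (m + 1), (m.choose n : ℚ) * bernoulli n = bernoulli' m := by
  simpa [Polynomial.bernoulli, Polynomial.eval_finsetSum, mul_comm] using
    Polynomial.bernoulli_eval_one m

noncomputable def bernoulliBinomialSum (r m : ℕ) (x : ℚ) : ℚ :=
  ∑ n ∈ range (m + 1), Ring.choose x (m - n) * ((n + r).choose n : ℚ) * bernoulli n

theorem bernoulliBinomialSum_zero (r : ℕ) (x : ℚ) : bernoulliBinomialSum r 0 x = 1 := by
  simp [bernoulliBinomialSum]

theorem bernoulliBinomialSum_succ_add_one_sub (r m : ℕ) (x : ℚ) :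
    bernoulliBinomialSum r (m + 1) (x + 1) - bernoulliBinomialSum r (m + 1) x =
      bernoulliBinomialSum r m x := by
  rw [bernoulliBinomialSum, bernoulliBinomialSum, ← sum_sub_distrib, sum_range_succ,
    Nat.sub_self, Ring.choose_zero_right, Ring.choose_zero_right, sub_self, add_zero,
    bernoulliBinomialSum]
  refine sum_congr rfl fun n hn => ?_
  rw [Nat.sub_add_comm (mem_range_succ_iff.mp hn), Ring.choose_succ_succ]
  ring

theorem bernoulliBinomialSum_at_zero (r m : ℕ) :
    bernoulliBinomialSum r m 0 = (m + r).choose m * bernoulli m := by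
  rw [bernoulliBinomialSum, sum_range_succ, sum_eq_zero, Nat.sub_self, Ring.choose_zero_right]
  · ring
  intro n hn
  rw [← Nat.succ_pred_eq_of_pos (Nat.sub_pos_of_lt (mem_range.mp hn)), Ring.choose_zero_succ,
    zero_mul, zero_mul]

theorem bernoulliBinomialSum_reflect_zero (r m : ℕ) :
    bernoulliBinomialSum r m (m + r) = (-1) ^ m * bernoulliBinomialSum r m 0 := by
  have hterm : ∀ n ∈ range (m + 1), Ring.choose ((m + r : ℕ) : ℚ) (m - n) *
      ((n + r).choose n : ℚ) * bernoulli n = (m + r).choose m * (m.choose n * bernoulli n) := by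
    intro n hn
    rw [Ring.choose_natCast, ← mul_assoc, ← Nat.cast_mul, ← Nat.cast_mul,
      Nat.add_choose_sub_mul_add_choose_s14 (mem_range_succ_iff.mp hn), Nat.cast_mul]
  rw [bernoulliBinomialSum, ← Nat.cast_add, sum_congr rfl hterm, ← mul_sum,
    sum_range_choose_mul_bernoulli, bernoulli'_eq_bernoulli, bernoulliBinomialSum_at_zero]
  ring

theorem bernoulliBinomialSum_reflect (r m : ℕ) (x : ℤ) :
    bernoulliBinomialSum r m (m + r - x) = (-1) ^ m * bernoulliBinomialSum r m x := by
  induction m generalizing x with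
  | zero => simp [bernoulliBinomialSum_zero]
  | succ m ih =>
    let defect : ℤ → ℚ := fun y => bernoulliBinomialSum r (m + 1) ((m + 1 : ℕ) + r - y) -
      (-1) ^ (m + 1) * bernoulliBinomialSum r (m + 1) y
    have hperiodic : Function.Periodic defect 1 := by
      intro y
      have hy := bernoulliBinomialSum_succ_add_one_sub r m y
      have hy' := bernoulliBinomialSum_succ_add_one_sub r m (m + r - y)
      simp only [defect]
      push_cast
      rw [show (m : ℚ) + 1 + r - (y + 1) = m + r - y by ring,
        show (m : ℚ) + 1 + r - y = m + r - y + 1 by ring]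
      linear_combination -hy' - (-1) ^ (m + 1) * hy - ih y
    have hzero : defect 0 = 0 := by
      simp only [defect, Int.cast_zero, sub_zero, bernoulliBinomialSum_reflect_zero, sub_self]
    have hx : defect x = 0 := by rw [← hzero, ← hperiodic.int_mul_eq x, Int.cast_id, mul_one]
    exact sub_eq_zero.mp hx

theorem bernoulli_identity_family_general (K : ℕ) (s : ℕ) (hs1 : 1 ≤ s) (hs2 : s ≤ K)
    (i : ℤ) :
    (-1 : ℚ) * ∑ n ∈ Finset.range (2 * K + 1 - 2 * s + 1),
        Ring.choose (i : ℚ) (2 * K + 1 - 2 * s - n)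
          * (Nat.choose (n + 2 * s - 2) n : ℚ) * bernoulli n
    = ∑ n ∈ Finset.range (2 * K + 1 - 2 * s + 1),
        Ring.choose (((2 * K - 1 - i : ℤ) : ℚ)) (2 * K + 1 - 2 * s - n)
          * (Nat.choose (n + 2 * s - 2) n : ℚ) * bernoulli n := by
  have hshift : ∀ n, n + 2 * s - 2 = n + (2 * s - 2) := by omega
  have hodd : Odd (2 * K + 1 - 2 * s) := ⟨K - s, by omega⟩
  have harg : ((2 * K - 1 - i : ℤ) : ℚ) =
      ((2 * K + 1 - 2 * s : ℕ) : ℚ) + ((2 * s - 2 : ℕ) : ℚ) - i := by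
    push_cast [Nat.cast_sub (show 2 * s ≤ 2 * K + 1 by omega),
      Nat.cast_sub (show 2 ≤ 2 * s by omega)]
    ring
  simp only [hshift]
  change -1 * bernoulliBinomialSum (2 * s - 2) (2 * K + 1 - 2 * s) i =
    bernoulliBinomialSum (2 * s - 2) (2 * K + 1 - 2 * s) ((2 * K - 1 - i : ℤ) : ℚ)
  rw [harg, bernoulliBinomialSum_reflect, hodd.neg_one_pow]

/-- **A family of Bernoulli number identities.**
For odd `k = 2K+1 ≥ 5`, every integer `s` with `1 ≤ s ≤ K`, and every integer `i`
(possibly negative),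
`(-1) · ∑_{n=0}^{k-2s} Ch(i, k-2s-n)·C(n+2s-2, n)·B_n
  = ∑_{n=0}^{k-2s} Ch(k-2-i, k-2s-n)·C(n+2s-2, n)·B_n`,
where `Ch(a,b) = a(a-1)⋯(a-b+1)/b!` is the generalized binomial coefficient
(`Ring.choose` over `ℚ`). -/
theorem bernoulli_identity_family (K : ℕ) (hK : 2 ≤ K) (s : ℕ) (hs1 : 1 ≤ s) (hs2 : s ≤ K)
    (i : ℤ) :
    (-1 : ℚ) * ∑ n ∈ Finset.range (2 * K + 1 - 2 * s + 1),
        Ring.choose (i : ℚ) (2 * K + 1 - 2 * s - n)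
          * (Nat.choose (n + 2 * s - 2) n : ℚ) * bernoulli n
    = ∑ n ∈ Finset.range (2 * K + 1 - 2 * s + 1),
        Ring.choose (((2 * K - 1 - i : ℤ) : ℚ)) (2 * K + 1 - 2 * s - n)
          * (Nat.choose (n + 2 * s - 2) n : ℚ) * bernoulli n :=
  bernoulli_identity_family_general K s hs1 hs2 i
end
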